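/- Let Q : ℝ → ℂ^{m×m} have locally integrable entries. Then J D_max(−Q) J = D_max(Q^⊤), where J = σ₁C is the conjugation (JF)(x) = (conj(F₂(x)), conj(F₁(x)))^⊤. In particular, if Q(x)^⊤ = Q(x) for a.e. x, then J D_max(−Q) J = D_max(Q) and consequently D_min(Q) is J-symmetric, i.e., J D_min(Q) J ⊆ D_min(Q)*. -/

import Mathlib

open MeasureTheory

noncomputable section

/-- Index set for `ℂ^{2m}`, split into the two `m`-blocks. -/
abbrev Idx (m : ℕ) := Sum (Fin m) (Fin m)

/-- `ℂ^{2m}` with its Euclidean (Hilbert space) structure. -/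
abbrev Vec (m : ℕ) := EuclideanSpace ℂ (Idx m)

/-- A function is locally absolutely continuous iff it is the indefinite integral of a
locally integrable function. -/
def LocAC {E : Type*} [NormedAddCommGroup E] [NormedSpace ℝ E] (F : ℝ → E) : Prop :=
  ∃ g : ℝ → E, LocallyIntegrable g volume ∧ ∀ x : ℝ, F x = F 0 + ∫ t in (0:ℝ)..x, g t

/-- The Dirac-type differential expression `M(Q)F = i (F₁' - Q F₂, -Q* F₁ - F₂')ᵀ`. -/
def Mop {m : ℕ} (Q : ℝ → Fin m → Fin m → ℂ) (F : ℝ → Vec m) : ℝ → Vec m := fun x => WithLp.toLp 2 (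
  Sum.elim
    (fun i => Complex.I * (deriv (fun y => F y (Sum.inl i)) x - ∑ j, Q x i j * F x (Sum.inr j)))
    (fun i => Complex.I * (-(∑ j, (starRingEnd ℂ) (Q x j i) * F x (Sum.inl j))
        - deriv (fun y => F y (Sum.inr i)) x)))

/-- The underlying Hilbert space `L²(ℝ)^{2m}`. -/
abbrev Hsp (m : ℕ) := Lp (Vec m) 2 (volume : Measure ℝ)

/-- The pointwise conjugation `J = σ₁ C` on `ℂ^{2m}`:
`(J v)₁ = conj v₂`, `(J v)₂ = conj v₁`. -/
def Jfun {m : ℕ} (v : Vec m) : Vec m :=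
  WithLp.toLp 2 (Sum.elim (fun i => (starRingEnd ℂ) (v (Sum.inr i))) (fun i => (starRingEnd ℂ) (v (Sum.inl i))))

/-- `JRel u w` expresses that `w = J u` as elements of `L²(ℝ)^{2m}`. -/
def JRel {m : ℕ} (u w : Hsp m) : Prop :=
  (⇑w : ℝ → Vec m) =ᵐ[volume] fun x => Jfun (u x)

/-- The graph of the maximal operator `D_max(Q)` in `L²(ℝ)^{2m}`: pairs `(G, M(Q)G)` where `G`
has a locally absolutely continuous representative `F` with `M(Q)F ∈ L²`. -/
def maxGraph {m : ℕ} (Q : ℝ → Fin m → Fin m → ℂ) : Set (Hsp m × Hsp m) :=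
  {p | ∃ F : ℝ → Vec m, LocAC F ∧ (⇑p.1 : ℝ → Vec m) =ᵐ[volume] F ∧
        (⇑p.2 : ℝ → Vec m) =ᵐ[volume] Mop Q F}

/-- The graph of the minimal operator `D_min(Q)`: the restriction of `D_max(Q)` to
compactly supported elements of its domain. -/
def minGraph {m : ℕ} (Q : ℝ → Fin m → Fin m → ℂ) : Set (Hsp m × Hsp m) :=
  {p | ∃ F : ℝ → Vec m, LocAC F ∧ HasCompactSupport F ∧ (⇑p.1 : ℝ → Vec m) =ᵐ[volume] F ∧
        (⇑p.2 : ℝ → Vec m) =ᵐ[volume] Mop Q F}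

/-- The graph of the Hilbert-space adjoint of the (densely defined) operator with graph `Γ`:
`(u, v)` belongs to it iff `⟪SF, u⟫ = ⟪F, v⟫` for all `(F, SF) ∈ Γ`. -/
def adjGraph {m : ℕ} (Γ : Set (Hsp m × Hsp m)) : Set (Hsp m × Hsp m) :=
  {q | ∀ p ∈ Γ, (inner ℂ p.2 q.1 : ℂ) = inner ℂ p.1 q.2}

/-- The graph of `J S J` for an operator with graph `Γ` (recall `J² = I`). -/
def Jconj {m : ℕ} (Γ : Set (Hsp m × Hsp m)) : Set (Hsp m × Hsp m) :=
  {p | ∃ q ∈ Γ, JRel p.1 q.1 ∧ JRel p.2 q.2}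

/-!
Conjugation commutes with `d/dx` and `σ₁` swaps the two blocks, so pointwise
`J (M(R) F) = M(-Rᵀ) (J F)`; as `J` is an involution of `L²` that preserves local absolute
continuity, `J D_max(-Q) J = D_max(Qᵀ)`.

For `J`-symmetry note `⟪u, J v⟫ = conj (uᵀ σ₁ v)`. When `Q = Qᵀ` the potential terms cancel in
the Lagrange identity `(M G)ᵀ σ₁ F - Gᵀ σ₁ (M F) = i (G₁ F₂ - G₂ F₁)'`, and the right side
integrates to zero because `G₁ F₂ - G₂ F₁` is locally absolutely continuous with compact support.
The fundamental theorem of calculus for complex-valued locally absolutely continuous functions is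
reduced to the real-valued one through real and imaginary parts.
-/

open Set Filter ComplexConjugate

theorem MeasureTheory.LocallyIntegrable.intervalIntegrable {E : Type*} [NormedAddCommGroup E]
    {f : ℝ → E} (hf : LocallyIntegrable f volume) (a b : ℝ) : IntervalIntegrable f volume a b :=
  (hf.integrableOn_isCompact isCompact_uIcc).intervalIntegrable

theorem LipschitzWith.comp_absolutelyContinuousOnInterval {X Y : Type*} [PseudoMetricSpace X]
    [PseudoMetricSpace Y] {g : X → Y} {K : NNReal} (hg : LipschitzWith K g) {f : ℝ → X} {a b : ℝ}
    (hf : AbsolutelyContinuousOnInterval f a b) : AbsolutelyContinuousOnInterval (g ∘ f) a b := by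
  have hK := Filter.Tendsto.const_mul (K : ℝ) hf
  rw [mul_zero] at hK
  refine squeeze_zero (fun _ ↦ Finset.sum_nonneg fun _ _ ↦ dist_nonneg) (fun E ↦ ?_) hK
  rw [Finset.mul_sum]
  exact Finset.sum_le_sum fun _ _ ↦ hg.dist_le_mul _ _

theorem MeasureTheory.LocallyIntegrable.absolutelyContinuousOnInterval_intervalIntegral
    {f : ℝ → ℂ} (hf : LocallyIntegrable f volume) (a b : ℝ) :
    AbsolutelyContinuousOnInterval (fun x ↦ ∫ t in a..x, f t) a b := by
  have hacRe : AbsolutelyContinuousOnInterval (fun x ↦ ∫ t in a..x, (f t).re) a b :=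
    IntervalIntegrable.absolutelyContinuousOnInterval_intervalIntegral
      (IntegrableOn.intervalIntegrable (hf.integrableOn_isCompact isCompact_uIcc).re) (by simp)
  have hacIm : AbsolutelyContinuousOnInterval (fun x ↦ ∫ t in a..x, (f t).im) a b :=
    IntervalIntegrable.absolutelyContinuousOnInterval_intervalIntegral
      (IntegrableOn.intervalIntegrable (hf.integrableOn_isCompact isCompact_uIcc).im) (by simp)
  have hsplit : (fun x ↦ ∫ t in a..x, f t) = (fun x ↦ ((∫ t in a..x, (f t).re : ℝ) : ℂ)) +
      fun x ↦ Complex.I • ((∫ t in a..x, (f t).im : ℝ) : ℂ) := by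
    funext x
    have h := hf.intervalIntegrable a x
    have hre : ∫ t in a..x, (f t).re = (∫ t in a..x, f t).re :=
      intervalIntegral.intervalIntegral_re h
    have him : ∫ t in a..x, (f t).im = (∫ t in a..x, f t).im :=
      intervalIntegral.intervalIntegral_im h
    rw [Pi.add_apply, hre, him, smul_eq_mul, mul_comm]
    exact (Complex.re_add_im _).symm
  rw [hsplit]
  exact (Complex.isometry_ofReal.lipschitz.comp_absolutelyContinuousOnInterval hacRe).add
    ((Complex.isometry_ofReal.lipschitz.comp_absolutelyContinuousOnInterval hacIm).const_smul _)

namespace LocAC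

variable {E : Type*} [NormedAddCommGroup E] [NormedSpace ℝ E] {F : ℝ → E}

theorem continuous (hF : LocAC F) : Continuous F := by
  obtain ⟨g, hg, hFg⟩ := hF
  rw [show F = fun y ↦ F 0 + ∫ t in (0 : ℝ)..y, g t from funext hFg]
  exact continuous_const.add (intervalIntegral.continuous_primitive hg.intervalIntegrable 0)

theorem sub {G : ℝ → E} (hF : LocAC F) (hG : LocAC G) : LocAC (fun x ↦ F x - G x) := by
  obtain ⟨f, hf, hFf⟩ := hF
  obtain ⟨g, hg, hGg⟩ := hG
  refine ⟨fun t ↦ f t - g t, hf.sub hg, fun x ↦ ?_⟩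
  dsimp only
  rw [hFf x, hGg x, intervalIntegral.integral_sub (hf.intervalIntegrable 0 x)
    (hg.intervalIntegrable 0 x)]
  abel

theorem sum {ι : Type*} (s : Finset ι) {F : ι → ℝ → E} (hF : ∀ i, LocAC (F i)) :
    LocAC (fun x ↦ ∑ i ∈ s, F i x) := by
  choose g hg hFg using hF
  refine ⟨fun x ↦ ∑ i ∈ s, g i x, locallyIntegrable_finsetSum s fun i _ ↦ hg i, fun x ↦ ?_⟩
  rw [intervalIntegral.integral_finsetSum fun i _ ↦ (hg i).intervalIntegrable 0 x,
    ← Finset.sum_add_distrib]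
  exact Finset.sum_congr rfl fun i _ ↦ hFg i x

variable [CompleteSpace E]

theorem ae_hasDerivAt_of_eq_add_integral {g : ℝ → E} (hg : LocallyIntegrable g volume)
    (hFg : ∀ x, F x = F 0 + ∫ t in (0 : ℝ)..x, g t) : ∀ᵐ x, HasDerivAt F (g x) x := by
  filter_upwards [_root_.LocallyIntegrable.ae_hasDerivAt_integral hg] with x hx
  rw [show F = fun y ↦ F 0 + ∫ t in (0 : ℝ)..y, g t from funext hFg]
  exact (hx 0).const_add _

theorem deriv_ae_eq {g : ℝ → E} (hg : LocallyIntegrable g volume)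
    (hFg : ∀ x, F x = F 0 + ∫ t in (0 : ℝ)..x, g t) : deriv F =ᵐ[volume] g :=
  (ae_hasDerivAt_of_eq_add_integral hg hFg).mono fun _ hx ↦ hx.deriv

theorem ae_hasDerivAt (hF : LocAC F) : ∀ᵐ x, HasDerivAt F (deriv F x) x := by
  obtain ⟨g, hg, hFg⟩ := hF
  exact (ae_hasDerivAt_of_eq_add_integral hg hFg).mono fun _ hx ↦ hx.differentiableAt.hasDerivAt

theorem locallyIntegrable_deriv (hF : LocAC F) : LocallyIntegrable (deriv F) volume := by
  obtain ⟨g, hg, hFg⟩ := hF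
  exact hg.congr (deriv_ae_eq hg hFg).symm

theorem integral_deriv (hF : LocAC F) (a b : ℝ) : ∫ x in a..b, deriv F x = F b - F a := by
  obtain ⟨g, hg, hFg⟩ := hF
  rw [intervalIntegral.integral_congr_ae ((deriv_ae_eq hg hFg).mono fun x hx _ ↦ hx), hFg b,
    hFg a, add_sub_add_left_eq_sub,
    intervalIntegral.integral_interval_sub_left (hg.intervalIntegrable 0 b)
      (hg.intervalIntegrable 0 a)]

theorem eq_add_integral_deriv (hF : LocAC F) (a x : ℝ) : F x = F a + ∫ t in a..x, deriv F t := by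
  rw [hF.integral_deriv, add_sub_cancel]

theorem comp_clm {E' : Type*} [NormedAddCommGroup E'] [NormedSpace ℝ E'] [CompleteSpace E']
    (L : E →L[ℝ] E') (hF : LocAC F) : LocAC (fun x ↦ L (F x)) := by
  obtain ⟨g, hg, hFg⟩ := hF
  refine ⟨fun x ↦ L (g x), fun x ↦ ?_, fun x ↦ ?_⟩
  · obtain ⟨s, hs, hgs⟩ := hg x
    exact ⟨s, hs, L.integrable_comp hgs⟩
  · dsimp only
    rw [hFg x, map_add, ← L.intervalIntegral_comp_comm (hg.intervalIntegrable 0 x)]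

theorem absolutelyContinuousOnInterval {F : ℝ → ℂ} (hF : LocAC F) (a b : ℝ) :
    AbsolutelyContinuousOnInterval F a b := by
  rw [show F = fun x ↦ F a + ∫ t in a..x, deriv F t from funext (hF.eq_add_integral_deriv a)]
  exact (LipschitzWith.const (F a)).lipschitzOnWith.absolutelyContinuousOnInterval.fun_add
    (hF.locallyIntegrable_deriv.absolutelyContinuousOnInterval_intervalIntegral a b)

theorem mul {F G : ℝ → ℂ} (hF : LocAC F) (hG : LocAC G) : LocAC (fun x ↦ F x * G x) := by
  have hint : LocallyIntegrable (fun x ↦ deriv F x * G x + F x * deriv G x) volume :=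
    (hF.locallyIntegrable_deriv.mul_continuous hG.continuous).add
      (hG.locallyIntegrable_deriv.continuous_mul hF.continuous)
  refine ⟨_, hint, fun x ↦ ?_⟩
  set Φ : ℝ → ℂ := fun y ↦ F y * G y - ∫ t in (0 : ℝ)..y, (deriv F t * G t + F t * deriv G t)
  have hΦ : AbsolutelyContinuousOnInterval Φ 0 x :=
    ((hF.absolutelyContinuousOnInterval 0 x).fun_smul
      (hG.absolutelyContinuousOnInterval 0 x)).fun_sub
        (hint.absolutelyContinuousOnInterval_intervalIntegral 0 x)
  have hΦ' : ∀ᵐ y, y ∈ uIcc 0 x → HasDerivAt Φ 0 y := by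
    filter_upwards [hF.ae_hasDerivAt, hG.ae_hasDerivAt,
      _root_.LocallyIntegrable.ae_hasDerivAt_integral hint] with y hFy hGy hy _
    simpa only [sub_self] using (hFy.fun_mul hGy).fun_sub (hy 0)
  obtain ⟨C, hC⟩ := hΦ.const_of_ae_hasDerivAt_zero hΦ'
  have h0 := hC 0 left_mem_uIcc
  have hx := hC x right_mem_uIcc
  simp only [Φ, intervalIntegral.integral_same, sub_zero] at h0 hx
  linear_combination hx - h0

theorem integral_deriv_eq_zero (hF : LocAC F) (hc : HasCompactSupport F) :
    ∫ x, deriv F x = 0 := by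
  obtain ⟨R, hR⟩ := hc.isCompact.isBounded.subset_closedBall 0
  set r := max R 0 + 1
  have hr : 0 < r := by positivity
  have hout : ∀ x, r ≤ |x| → x ∉ tsupport F := fun x hx h ↦ by
    have := hR h
    rw [Metric.mem_closedBall, dist_zero_right, Real.norm_eq_abs] at this
    linarith [le_max_left R 0]
  have hfar : ∀ x ∉ Ioc (-r) r, r ≤ |x| := fun x hx ↦ by
    rw [mem_Ioc, not_and_or, not_lt, not_le] at hx
    exact le_abs'.2 (hx.imp id le_of_lt)
  have hderiv : ∀ x ∉ Ioc (-r) r, deriv F x = 0 := fun x hx ↦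
    image_eq_zero_of_notMem_tsupport fun h ↦ hout x (hfar x hx) (tsupport_deriv_subset h)
  rw [← setIntegral_eq_integral_of_forall_compl_eq_zero hderiv,
    ← intervalIntegral.integral_of_le (by linarith), hF.integral_deriv,
    image_eq_zero_of_notMem_tsupport (hout r (le_abs_self r)),
    image_eq_zero_of_notMem_tsupport (hout (-r) (by rw [abs_neg]; exact le_abs_self r)), sub_zero]

end LocAC

theorem LocAC.apply {ι : Type*} [Fintype ι] {F : ℝ → EuclideanSpace ℂ ι} (hF : LocAC F) (k : ι) :
    LocAC (fun x ↦ F x k) :=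
  hF.comp_clm ((EuclideanSpace.proj k).restrictScalars ℝ)

theorem LocAC.ae_differentiableAt_apply {ι : Type*} [Fintype ι] {F : ℝ → EuclideanSpace ℂ ι}
    (hF : LocAC F) : ∀ᵐ x, ∀ k, DifferentiableAt ℝ (fun y ↦ F y k) x :=
  ae_all_iff.2 fun k ↦ (hF.apply k).ae_hasDerivAt.mono fun _ hx ↦ hx.differentiableAt

theorem deriv_conj (f : ℝ → ℂ) (x : ℝ) : deriv (fun y ↦ conj (f y)) x = conj (deriv f x) :=
  deriv.star

section Conjugation

variable {m : ℕ}

@[simp]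
theorem Jfun_Jfun (v : Vec m) : Jfun (Jfun v) = v := by
  ext ι; cases ι <;> simp [Jfun]

variable (m) in
def Jclm : Vec m →L[ℝ] Vec m :=
  LinearMap.toContinuousLinearMap
    { toFun := Jfun
      map_add' v w := by ext ι; cases ι <;> simp [Jfun]
      map_smul' c v := by ext ι; cases ι <;> simp [Jfun, Complex.real_smul] }

def Jop (u : Hsp m) : Hsp m := (Jclm m).compLp u

theorem coeFn_Jop (u : Hsp m) : Jop u =ᵐ[volume] fun x ↦ Jfun (u x) :=
  (Jclm m).coeFn_compLp' u

@[simp]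
theorem Jop_Jop (u : Hsp m) : Jop (Jop u) = u := by
  refine Lp.ext ((coeFn_Jop _).trans ?_)
  filter_upwards [coeFn_Jop u] with x hx
  rw [hx, Jfun_Jfun]

theorem JRel_iff {u w : Hsp m} : JRel u w ↔ w = Jop u :=
  ⟨fun h ↦ Lp.ext (h.trans (coeFn_Jop u).symm), fun h ↦ h ▸ coeFn_Jop u⟩

theorem mem_Jconj_iff {Γ : Set (Hsp m × Hsp m)} {p : Hsp m × Hsp m} :
    p ∈ Jconj Γ ↔ (Jop p.1, Jop p.2) ∈ Γ := by
  simp only [Jconj, JRel_iff]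
  exact ⟨fun ⟨q, hq, h₁, h₂⟩ ↦ h₁ ▸ h₂ ▸ hq, fun h ↦ ⟨_, h, rfl, rfl⟩⟩

theorem ae_eq_Jfun_of_Jop_ae_eq {u : Hsp m} {V : ℝ → Vec m} (h : Jop u =ᵐ[volume] V) :
    u =ᵐ[volume] fun x ↦ Jfun (V x) := by
  filter_upwards [coeFn_Jop u, h] with x h₁ h₂
  rw [← h₂, h₁, Jfun_Jfun]

end Conjugation

section Graphs

variable {m : ℕ}

theorem Mop_neg_transpose_Jfun (R : ℝ → Fin m → Fin m → ℂ) (F : ℝ → Vec m) :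
    Mop (fun x i j ↦ -R x j i) (fun x ↦ Jfun (F x)) = fun x ↦ Jfun (Mop R F x) := by
  funext x
  ext (i | i)
  · show Complex.I * (deriv (fun y ↦ Jfun (F y) (.inl i)) x - _) = _
    simp only [Mop, Jfun, PiLp.toLp_apply, Sum.elim_inl, Sum.elim_inr, deriv_conj, map_sub,
      map_neg, map_mul, map_sum, Complex.conj_I, Complex.conj_conj, neg_mul, Finset.sum_neg_distrib]
    ring
  · show Complex.I * (_ - deriv (fun y ↦ Jfun (F y) (.inr i)) x) = _
    simp only [Mop, Jfun, PiLp.toLp_apply, Sum.elim_inl, Sum.elim_inr, deriv_conj, map_sub,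
      map_neg, map_mul, map_sum, Complex.conj_I, Complex.conj_conj, neg_mul, Finset.sum_neg_distrib]
    ring

theorem Jop_mem_maxGraph {R : ℝ → Fin m → Fin m → ℂ} {p : Hsp m × Hsp m} (hp : p ∈ maxGraph R) :
    (Jop p.1, Jop p.2) ∈ maxGraph (fun x i j ↦ -R x j i) := by
  obtain ⟨F, hF, h₁, h₂⟩ := hp
  refine ⟨fun x ↦ Jfun (F x), hF.comp_clm (Jclm m), (coeFn_Jop _).trans (h₁.fun_comp Jfun), ?_⟩
  rw [Mop_neg_transpose_Jfun]
  exact (coeFn_Jop _).trans (h₂.fun_comp Jfun)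

theorem Jconj_maxGraph (R : ℝ → Fin m → Fin m → ℂ) :
    Jconj (maxGraph R) = maxGraph (fun x i j ↦ -R x j i) := by
  ext p
  rw [mem_Jconj_iff]
  constructor
  · intro hp
    simpa using Jop_mem_maxGraph hp
  · intro hp
    simpa only [neg_neg] using Jop_mem_maxGraph hp

theorem Mop_ae_congr {Q Q' : ℝ → Fin m → Fin m → ℂ} (h : ∀ᵐ x, ∀ i j, Q x i j = Q' x i j)
    (F : ℝ → Vec m) : Mop Q F =ᵐ[volume] Mop Q' F := by
  filter_upwards [h] with x hx
  simp only [Mop, hx]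

theorem maxGraph_ae_congr {Q Q' : ℝ → Fin m → Fin m → ℂ} (h : ∀ᵐ x, ∀ i j, Q x i j = Q' x i j) :
    maxGraph Q = maxGraph Q' := by
  ext p
  exact ⟨fun ⟨F, hF, h₁, h₂⟩ ↦ ⟨F, hF, h₁, h₂.trans (Mop_ae_congr h F)⟩,
    fun ⟨F, hF, h₁, h₂⟩ ↦ ⟨F, hF, h₁, h₂.trans (Mop_ae_congr h F).symm⟩⟩

end Graphs

section Pairings

variable {m : ℕ}

/-- `uᵀ σ₁ v`, with no complex conjugation. -/
def sigmaPairing (u v : Vec m) : ℂ :=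
  ∑ i, (u (.inl i) * v (.inr i) + u (.inr i) * v (.inl i))

def sympPairing (u v : Vec m) : ℂ :=
  ∑ i, (u (.inl i) * v (.inr i) - u (.inr i) * v (.inl i))

theorem inner_Jfun (u v : Vec m) : inner ℂ u (Jfun v) = conj (sigmaPairing u v) := by
  simp only [Jfun, sigmaPairing, PiLp.inner_apply, RCLike.inner_apply, Fintype.sum_sum_type,
    Sum.elim_inl, Sum.elim_inr, map_sum, map_add, map_mul, ← Finset.sum_add_distrib]
  exact Finset.sum_congr rfl fun i _ ↦ by ring

theorem sum_mulVec_mul_symm {n : ℕ} {A : Fin n → Fin n → ℂ} (hA : ∀ i j, A i j = A j i)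
    (u v : Fin n → ℂ) : ∑ i, (∑ j, A i j * u j) * v i = ∑ i, u i * ∑ j, A i j * v j := by
  simp only [Finset.sum_mul, Finset.mul_sum]
  rw [Finset.sum_comm]
  exact Finset.sum_congr rfl fun i _ ↦ Finset.sum_congr rfl fun j _ ↦ by rw [hA]; ring

theorem sigmaPairing_Mop_sub_sigmaPairing_Mop {Q : ℝ → Fin m → Fin m → ℂ} {F G : ℝ → Vec m}
    {x : ℝ} (hQ : ∀ i j, Q x i j = Q x j i) (hF : ∀ ι, DifferentiableAt ℝ (fun y ↦ F y ι) x)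
    (hG : ∀ ι, DifferentiableAt ℝ (fun y ↦ G y ι) x) :
    sigmaPairing (Mop Q G x) (F x) - sigmaPairing (G x) (Mop Q F x) =
      Complex.I * deriv (fun y ↦ sympPairing (G y) (F y)) x := by
  have hderiv : deriv (fun y ↦ sympPairing (G y) (F y)) x = ∑ i,
      (deriv (fun y ↦ G y (.inl i)) x * F x (.inr i) +
          G x (.inl i) * deriv (fun y ↦ F y (.inr i)) x -
        (deriv (fun y ↦ G y (.inr i)) x * F x (.inl i) +
          G x (.inr i) * deriv (fun y ↦ F y (.inl i)) x)) := by
    unfold sympPairing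
    refine (HasDerivAt.fun_sum fun i _ ↦ ?_).deriv
    exact ((hG (.inl i)).hasDerivAt.fun_mul (hF (.inr i)).hasDerivAt).fun_sub
      ((hG (.inr i)).hasDerivAt.fun_mul (hF (.inl i)).hasDerivAt)
  have h₁ := sum_mulVec_mul_symm hQ (fun j ↦ G x (.inr j)) (fun i ↦ F x (.inr i))
  have h₂ := sum_mulVec_mul_symm (A := fun i j ↦ conj (Q x j i)) (fun i j ↦ by rw [hQ])
    (fun j ↦ G x (.inl j)) (fun i ↦ F x (.inl i))
  rw [hderiv, ← sub_eq_zero, sigmaPairing, sigmaPairing, Finset.mul_sum, ← Finset.sum_sub_distrib,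
    ← Finset.sum_sub_distrib]
  simp only [Mop, PiLp.toLp_apply, Sum.elim_inl, Sum.elim_inr]
  calc _ = ∑ i, Complex.I *
        ((G x (.inr i) * ∑ j, Q x i j * F x (.inr j) -
            (∑ j, Q x i j * G x (.inr j)) * F x (.inr i)) +
          (G x (.inl i) * ∑ j, conj (Q x j i) * F x (.inl j) -
            (∑ j, conj (Q x j i) * G x (.inl j)) * F x (.inl i))) :=
        Finset.sum_congr rfl fun i _ ↦ by ring
    _ = 0 := by
      rw [← Finset.mul_sum, Finset.sum_add_distrib, Finset.sum_sub_distrib, Finset.sum_sub_distrib,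
        h₁, h₂]
      ring

theorem LocAC.sympPairing {F G : ℝ → Vec m} (hG : LocAC G) (hF : LocAC F) :
    LocAC (fun x ↦ sympPairing (G x) (F x)) :=
  LocAC.sum _ fun _ ↦ ((hG.apply _).mul (hF.apply _)).sub ((hG.apply _).mul (hF.apply _))

theorem HasCompactSupport.sympPairing {G : ℝ → Vec m} (hG : HasCompactSupport G)
    (F : ℝ → Vec m) :
    HasCompactSupport (fun x ↦ sympPairing (G x) (F x)) := by
  refine hG.mono fun x hx hGx ↦ hx ?_
  simp [_root_.sympPairing, hGx]

theorem inner_Mop_eq_inner_Mop {Q : ℝ → Fin m → Fin m → ℂ}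
    (hQ : ∀ᵐ x, ∀ i j, Q x i j = Q x j i) {F G : ℝ → Vec m} (hF : LocAC F) (hG : LocAC G)
    (hGc : HasCompactSupport G) {u₁ u₂ v₁ v₂ : Hsp m} (hu₁ : u₁ =ᵐ[volume] G)
    (hu₂ : u₂ =ᵐ[volume] Mop Q G) (hv₁ : v₁ =ᵐ[volume] fun x ↦ Jfun (F x))
    (hv₂ : v₂ =ᵐ[volume] fun x ↦ Jfun (Mop Q F x)) :
    inner ℂ u₂ v₁ = inner ℂ u₁ v₂ := by
  have hpt : (fun x ↦ inner ℂ (u₂ x) (v₁ x) - inner ℂ (u₁ x) (v₂ x)) =ᵐ[volume]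
      fun x ↦ conj (Complex.I * deriv (fun y ↦ _root_.sympPairing (G y) (F y)) x) := by
    filter_upwards [hu₁, hu₂, hv₁, hv₂, hQ, hF.ae_differentiableAt_apply,
      hG.ae_differentiableAt_apply] with x h₁ h₂ h₃ h₄ hQx hFx hGx
    rw [h₁, h₂, h₃, h₄, inner_Jfun, inner_Jfun, ← map_sub,
      sigmaPairing_Mop_sub_sigmaPairing_Mop hQx hFx hGx]
  rw [← sub_eq_zero, L2.inner_def, L2.inner_def,
    ← integral_sub (L2.integrable_inner _ _) (L2.integrable_inner _ _), integral_congr_ae hpt,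
    integral_conj, integral_const_mul, (hG.sympPairing hF).integral_deriv_eq_zero
      (hGc.sympPairing F), mul_zero, map_zero]

theorem Jconj_minGraph_subset_adjGraph {Q : ℝ → Fin m → Fin m → ℂ}
    (hQ : ∀ᵐ x, ∀ i j, Q x i j = Q x j i) : Jconj (minGraph Q) ⊆ adjGraph (minGraph Q) := by
  intro p hp w hw
  rw [mem_Jconj_iff] at hp
  obtain ⟨F, hF, -, h₁, h₂⟩ := hp
  obtain ⟨G, hG, hGc, hw₁, hw₂⟩ := hw
  exact inner_Mop_eq_inner_Mop hQ hF hG hGc hw₁ hw₂ (ae_eq_Jfun_of_Jop_ae_eq h₁)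
    (ae_eq_Jfun_of_Jop_ae_eq h₂)

end Pairings

theorem J_Dmax_neg_J_eq_Dmax_transpose_general (m : ℕ) (Q : ℝ → Fin m → Fin m → ℂ) :
    Jconj (maxGraph (fun x i j => -(Q x i j))) = maxGraph (fun x i j => Q x j i) ∧
      ((∀ᵐ x ∂(volume : Measure ℝ), ∀ i j, Q x i j = Q x j i) →
        Jconj (maxGraph (fun x i j => -(Q x i j))) = maxGraph Q ∧
          Jconj (minGraph Q) ⊆ adjGraph (minGraph Q)) := by
  have hJmax : Jconj (maxGraph (fun x i j => -(Q x i j))) = maxGraph (fun x i j => Q x j i) := by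
    simpa only [neg_neg] using Jconj_maxGraph (fun x i j => -(Q x i j))
  refine ⟨hJmax, fun hsymm ↦ ⟨?_, Jconj_minGraph_subset_adjGraph hsymm⟩⟩
  rw [hJmax]
  exact maxGraph_ae_congr (hsymm.mono fun _ hx i j ↦ hx j i)

/-- if `Q` has locally integrable entries, then `J D_max(-Q) J = D_max(Qᵀ)`
(as graphs). In particular, if `Qᵀ = Q` a.e., then `J D_max(-Q) J = D_max(Q)` and consequently
`D_min(Q)` is `J`-symmetric: `J D_min(Q) J ⊆ D_min(Q)*`. -/
theorem J_Dmax_neg_J_eq_Dmax_transpose (m : ℕ) (Q : ℝ → Fin m → Fin m → ℂ)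
    (hQ : ∀ i j, LocallyIntegrable (fun x => Q x i j) volume) :
    Jconj (maxGraph (fun x i j => -(Q x i j))) = maxGraph (fun x i j => Q x j i) ∧
      ((∀ᵐ x ∂(volume : Measure ℝ), ∀ i j, Q x i j = Q x j i) →
        Jconj (maxGraph (fun x i j => -(Q x i j))) = maxGraph Q ∧
          Jconj (minGraph Q) ⊆ adjGraph (minGraph Q)) :=
  J_Dmax_neg_J_eq_Dmax_transpose_general m Q
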